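/- Let 0 ≤ α < n, let 0 ≤ λ₁, λ₂ < n, and let Φ, Ψ be Young functions such that (i) M_α is bounded from L_Φ(ℝⁿ) to L_Ψ(ℝⁿ), (ii) there is c > 0 with Φ⁻¹(t) ≤ c·t^{α/n}·Ψ⁻¹(t) for all t > 0, and (iii) there is C > 0 with sup_{r<t<∞} Ψ⁻¹(t⁻ⁿ)/Φ⁻¹(t^{−λ₁}) ≤ C·Ψ⁻¹(r⁻ⁿ)/Ψ⁻¹(r^{−λ₂}) for all r > 0. Then M_α is bounded from the Orlicz–Morrey space M_{Φ,λ₁}(ℝⁿ) to M_{Ψ,λ₂}(ℝⁿ): there is C' > 0 with ‖M_α f‖_{M_{Ψ,λ₂}} ≤ C'·‖f‖_{M_{Φ,λ₁}} for all locally integrable f. -/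

import Mathlib

open MeasureTheory Metric Set NNReal ENNReal Filter

noncomputable section

/-- A Young function: a convex, left-continuous `Φ : [0,∞) → [0,∞]` with `Φ(0) = 0`
and `Φ(r) → ∞` as `r → ∞`. -/
structure YoungFunction where
  toFun : ℝ≥0 → ℝ≥0∞
  map_zero' : toFun 0 = 0
  convex' : ∀ (s t a b : ℝ≥0), a + b = 1 →
    toFun (a * s + b * t) ≤ (a : ℝ≥0∞) * toFun s + (b : ℝ≥0∞) * toFun t
  left_continuous' : ∀ s : ℝ≥0, 0 < s → toFun s = ⨆ (t : ℝ≥0) (_ : t < s), toFun t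
  tendsto_top' : Tendsto toFun atTop (nhds (⊤ : ℝ≥0∞))

namespace YoungFunction

/-- The generalized inverse `Φ⁻¹(s) = inf {r ≥ 0 : Φ(r) > s}` (with `inf ∅ = ∞`). -/
def inv (Φ : YoungFunction) (s : ℝ≥0∞) : ℝ≥0∞ :=
  sInf ((fun r : ℝ≥0 => (r : ℝ≥0∞)) '' {r : ℝ≥0 | s < Φ.toFun r})

/-- The canonical extension of `Φ` to `[0,∞]`. -/
def ext (Φ : YoungFunction) (s : ℝ≥0∞) : ℝ≥0∞ :=
  if s = ⊤ then ⊤ else Φ.toFun s.toNNReal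

/-- `Φ` is of lower type `p`: `Φ(st) ≤ C t^p Φ(s)` for all `t ∈ [0,1]`, `s ≥ 0`. -/
def IsLowerType (Φ : YoungFunction) (p : ℝ) : Prop :=
  ∃ C : ℝ, 0 < C ∧ ∀ (s t : ℝ≥0), t ≤ 1 →
    Φ.toFun (s * t) ≤ ENNReal.ofReal C * (t : ℝ≥0∞) ^ p * Φ.toFun s

/-- `Φ` is of upper type `p`: `Φ(st) ≤ C t^p Φ(s)` for all `t ≥ 1`, `s ≥ 0`. -/
def IsUpperType (Φ : YoungFunction) (p : ℝ) : Prop :=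
  ∃ C : ℝ, 0 < C ∧ ∀ (s t : ℝ≥0), 1 ≤ t →
    Φ.toFun (s * t) ≤ ENNReal.ofReal C * (t : ℝ≥0∞) ^ p * Φ.toFun s

end YoungFunction

variable {X : Type*} [MeasurableSpace X]

/-- The Luxemburg norm `‖g‖_{L_Φ(E)}` of an `[0,∞]`-valued function `g` on a set `E`. -/
def luxNormE (Φ : YoungFunction) (μ : Measure X) (E : Set X) (g : X → ℝ≥0∞) : ℝ≥0∞ :=
  sInf {lam : ℝ≥0∞ | 0 < lam ∧ ∫⁻ x in E, Φ.ext (g x / lam) ∂μ ≤ 1}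

/-- The Luxemburg norm `‖f‖_{L_Φ(E)}` of a real-valued function `f` on a set `E`. -/
def luxNorm (Φ : YoungFunction) (μ : Measure X) (E : Set X) (f : X → ℝ) : ℝ≥0∞ :=
  luxNormE Φ μ E fun x => (‖f x‖₊ : ℝ≥0∞)

/-- The weak Luxemburg norm `‖g‖_{WL_Φ(E)}`. -/
def wLuxNormE (Φ : YoungFunction) (μ : Measure X) (E : Set X) (g : X → ℝ≥0∞) : ℝ≥0∞ :=
  sInf {lam : ℝ≥0∞ | 0 < lam ∧
    ∀ t : ℝ≥0, 0 < t → Φ.toFun t * μ {x | x ∈ E ∧ (t : ℝ≥0∞) < g x / lam} ≤ 1}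

/-- The weak Luxemburg norm of a real-valued function. -/
def wLuxNorm (Φ : YoungFunction) (μ : Measure X) (E : Set X) (f : X → ℝ) : ℝ≥0∞ :=
  wLuxNormE Φ μ E fun x => (‖f x‖₊ : ℝ≥0∞)

/-- Euclidean space `ℝⁿ` with Lebesgue measure. -/
abbrev En (n : ℕ) := EuclideanSpace ℝ (Fin n)

/-- The fractional maximal operator
`M_α f(x) = sup_{t>0} |B(x,t)|^{α/n - 1} ∫_{B(x,t)} |f(y)| dy`. -/
def fracMaximal (n : ℕ) (α : ℝ) (f : En n → ℝ) (x : En n) : ℝ≥0∞ :=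
  ⨆ (t : ℝ) (_ : 0 < t),
    volume (ball x t) ^ (α / (n : ℝ) - 1) * ∫⁻ y in ball x t, (‖f y‖₊ : ℝ≥0∞)

/-- The commutator of the fractional maximal operator
`M_{b,α} f(x) = sup_{t>0} |B(x,t)|^{α/n - 1} ∫_{B(x,t)} |b(x)-b(y)||f(y)| dy`. -/
def commFracMaximal (n : ℕ) (α : ℝ) (b f : En n → ℝ) (x : En n) : ℝ≥0∞ :=
  ⨆ (t : ℝ) (_ : 0 < t),
    volume (ball x t) ^ (α / (n : ℝ) - 1) *
      ∫⁻ y in ball x t, (‖b x - b y‖₊ : ℝ≥0∞) * (‖f y‖₊ : ℝ≥0∞)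

/-- The Hardy–Littlewood maximal operator. -/
def hlMaximal (n : ℕ) (f : En n → ℝ) (x : En n) : ℝ≥0∞ :=
  ⨆ (t : ℝ) (_ : 0 < t),
    (volume (ball x t))⁻¹ * ∫⁻ y in ball x t, (‖f y‖₊ : ℝ≥0∞)

/-- The commutator of the Hardy–Littlewood maximal operator. -/
def commMaximal (n : ℕ) (b f : En n → ℝ) (x : En n) : ℝ≥0∞ :=
  ⨆ (t : ℝ) (_ : 0 < t),
    (volume (ball x t))⁻¹ * ∫⁻ y in ball x t, (‖b x - b y‖₊ : ℝ≥0∞) * (‖f y‖₊ : ℝ≥0∞)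

/-- The generalized Orlicz–Morrey norm `‖g‖_{M_{Φ,φ}}` (for `[0,∞]`-valued functions). -/
def morreyNormE (n : ℕ) (Φ : YoungFunction) (φ : En n → ℝ → ℝ) (g : En n → ℝ≥0∞) : ℝ≥0∞ :=
  ⨆ (x : En n) (r : ℝ) (_ : 0 < r),
    (ENNReal.ofReal (φ x r))⁻¹ * Φ.inv (ENNReal.ofReal r ^ (-(n : ℝ))) *
      luxNormE Φ volume (ball x r) g

/-- The generalized Orlicz–Morrey norm of a real-valued function. -/
def morreyNorm (n : ℕ) (Φ : YoungFunction) (φ : En n → ℝ → ℝ) (f : En n → ℝ) : ℝ≥0∞ :=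
  morreyNormE n Φ φ fun x => (‖f x‖₊ : ℝ≥0∞)

/-- The weak generalized Orlicz–Morrey norm `‖g‖_{WM_{Φ,φ}}`. -/
def wMorreyNormE (n : ℕ) (Φ : YoungFunction) (φ : En n → ℝ → ℝ) (g : En n → ℝ≥0∞) : ℝ≥0∞ :=
  ⨆ (x : En n) (r : ℝ) (_ : 0 < r),
    (ENNReal.ofReal (φ x r))⁻¹ * Φ.inv (ENNReal.ofReal r ^ (-(n : ℝ))) *
      wLuxNormE Φ volume (ball x r) g

/-- The Orlicz–Morrey norm `‖g‖_{M_{Φ,λ}}` with exponent `λ`. -/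
def morreyLamNormE (n : ℕ) (Φ : YoungFunction) (lam : ℝ) (g : En n → ℝ≥0∞) : ℝ≥0∞ :=
  ⨆ (x : En n) (r : ℝ) (_ : 0 < r),
    Φ.inv (ENNReal.ofReal r ^ (-lam)) * luxNormE Φ volume (ball x r) g

/-- The Orlicz–Morrey norm with exponent `λ` of a real-valued function. -/
def morreyLamNorm (n : ℕ) (Φ : YoungFunction) (lam : ℝ) (f : En n → ℝ) : ℝ≥0∞ :=
  morreyLamNormE n Φ lam fun x => (‖f x‖₊ : ℝ≥0∞)

/-- The average `f_{B(x,r)}` of `f` over the ball `B(x,r)`. -/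
def ballAvg (n : ℕ) (b : En n → ℝ) (x : En n) (r : ℝ) : ℝ :=
  ⨍ y in ball x r, b y

/-- The BMO seminorm `‖b‖_*`. -/
def bmoSeminorm (n : ℕ) (b : En n → ℝ) : ℝ≥0∞ :=
  ⨆ (x : En n) (r : ℝ) (_ : 0 < r),
    ENNReal.ofReal (⨍ y in ball x r, |b y - ballAvg n b x r|)

/-!
Fix a ball `B = B(x, r)`. On `B`, `M_α f ≤ M_α (f 1_{B(x, 2r)}) + D` for a constant `D`: balls
`B(y, t)` with `y ∈ B`, `t ≤ r` lie in `B(x, 2r)`, while for `t > r` Hölder's inequality in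
`L_Φ(B(y, t))` and condition (ii) bound the fractional average by
`Ψ⁻¹(t⁻ⁿ) ‖f‖_{L_Φ(B(y,t))} ≤ Ψ⁻¹(t⁻ⁿ) / Φ⁻¹(t^{-λ₁}) ‖f‖_{M_{Φ,λ₁}}`, and condition (iii) bounds
this uniformly in `t > r` by `C Ψ⁻¹(r⁻ⁿ) / Ψ⁻¹(r^{-λ₂}) ‖f‖_{M_{Φ,λ₁}}`. The local term is handled
by the boundedness (i) together with `Ψ⁻¹(r^{-λ₂}) ≤ 2ⁿ C Φ⁻¹((2r)^{-λ₁})`, which is (iii) at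
`t = 2r`, and the constant term by `‖D‖_{L_Ψ(B)} ≤ D / Ψ⁻¹(|B|⁻¹)` with `|B| ≈ rⁿ`.
-/

lemma ofReal_rpow_ne_top {r : ℝ} (hr : 0 < r) (p : ℝ) : ENNReal.ofReal r ^ p ≠ ⊤ :=
  ENNReal.rpow_ne_top_of_ne_zero (ENNReal.ofReal_pos.2 hr).ne' ENNReal.ofReal_ne_top

lemma mul_le_of_div_le_mul_div {a b c d C : ℝ≥0∞} (h : a / b ≤ C * (c / d)) (hb : b ≠ ⊤)
    (hd0 : d ≠ 0) (hd : d ≠ ⊤) (hCc : C * c ≠ ⊤) : a * d ≤ C * c * b := by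
  rcases eq_or_ne b 0 with rfl | hb0
  · rcases eq_or_ne a 0 with rfl | ha0
    · rw [zero_mul]; exact zero_le
    rw [ENNReal.div_zero ha0, top_le_iff, ← mul_div_assoc] at h
    exact absurd h (ENNReal.div_ne_top hCc hd0)
  calc a * d = a / b * b * d := by rw [ENNReal.div_mul_cancel hb0 hb]
    _ ≤ C * (c / d) * b * d := by gcongr
    _ = C * b * (c / d * d) := by ring
    _ = C * c * b := by rw [ENNReal.div_mul_cancel hd0 hd]; ring

namespace YoungFunction

variable (Φ : YoungFunction)

lemma toFun_mul_le {a : ℝ≥0} (ha : a ≤ 1) (u : ℝ≥0) :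
    Φ.toFun (a * u) ≤ a * Φ.toFun u := by
  simpa [Φ.map_zero'] using Φ.convex' u 0 a (1 - a) (add_tsub_cancel_of_le ha)

lemma mono : Monotone Φ.toFun := by
  intro s t hst
  rcases eq_or_ne t 0 with rfl | ht
  · rw [nonpos_iff_eq_zero.1 hst]
  calc Φ.toFun s = Φ.toFun (s / t * t) := by rw [div_mul_cancel₀ s ht]
    _ ≤ (s / t : ℝ≥0) * Φ.toFun t := Φ.toFun_mul_le (div_le_one_of_le₀ hst zero_le) t
    _ ≤ Φ.toFun t := mul_le_of_le_one_left' (by exact_mod_cast div_le_one_of_le₀ hst zero_le)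

lemma mul_toFun_le {K : ℝ≥0} (hK : 1 ≤ K) (u : ℝ≥0) :
    K * Φ.toFun u ≤ Φ.toFun (K * u) := by
  have hK0 : K ≠ 0 := (zero_lt_one.trans_le hK).ne'
  calc (K : ℝ≥0∞) * Φ.toFun u = K * Φ.toFun (K⁻¹ * (K * u)) := by rw [inv_mul_cancel_left₀ hK0]
    _ ≤ K * ((K⁻¹ : ℝ≥0) * Φ.toFun (K * u)) := by
      gcongr; exact Φ.toFun_mul_le (inv_le_one_of_one_le₀ hK) _
    _ = Φ.toFun (K * u) := by
      rw [← mul_assoc, ← ENNReal.coe_mul, mul_inv_cancel₀ hK0, ENNReal.coe_one, one_mul]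

lemma toFun_le_of_lt_inv {s : ℝ≥0∞} {t : ℝ≥0} (h : (t : ℝ≥0∞) < Φ.inv s) : Φ.toFun t ≤ s :=
  not_lt.1 fun hst => (sInf_le (mem_image_of_mem ((↑) : ℝ≥0 → ℝ≥0∞)
    (show t ∈ {r | s < Φ.toFun r} from hst))).not_gt h

lemma lt_toFun_of_inv_lt {s : ℝ≥0∞} {u : ℝ≥0} (h : Φ.inv s < u) : s < Φ.toFun u := by
  obtain ⟨_, ⟨r, hr, rfl⟩, hru⟩ := sInf_lt_iff.1 h
  exact hr.trans_le (Φ.mono (ENNReal.coe_le_coe.1 hru.le))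

lemma inv_mono : Monotone Φ.inv :=
  fun _ _ hst => sInf_le_sInf (image_mono fun _ hr => hst.trans_lt hr)

lemma inv_ne_top {s : ℝ≥0∞} (hs : s ≠ ⊤) : Φ.inv s ≠ ⊤ := by
  have hev : ∀ᶠ r in atTop, Φ.toFun r ∈ Ioi s := Φ.tendsto_top' (Ioi_mem_nhds hs.lt_top)
  obtain ⟨r, hr⟩ := hev.exists
  exact ne_top_of_le_ne_top ENNReal.coe_ne_top (sInf_le (mem_image_of_mem _ hr))

lemma inv_mul_le_mul {K : ℝ≥0∞} (hK : 1 ≤ K) (hKt : K ≠ ⊤) (u : ℝ≥0∞) :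
    Φ.inv (K * u) ≤ K * Φ.inv u := by
  lift K to ℝ≥0 using hKt
  have hK0 : (K : ℝ≥0∞) ≠ 0 := (zero_lt_one.trans_le hK).ne'
  rw [← ENNReal.div_le_iff' hK0 ENNReal.coe_ne_top]
  refine le_sInf ?_
  rintro _ ⟨r, hr, rfl⟩
  rw [ENNReal.div_le_iff' hK0 ENNReal.coe_ne_top, ← ENNReal.coe_mul]
  refine sInf_le (mem_image_of_mem _ ?_)
  calc (K : ℝ≥0∞) * u < K * Φ.toFun r := ENNReal.mul_lt_mul_right hK0 ENNReal.coe_ne_top hr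
    _ ≤ Φ.toFun (K * r) := Φ.mul_toFun_le (by exact_mod_cast hK) r

lemma inv_mul_le_max_mul {a : ℝ≥0∞} (ha : a ≠ ⊤) (u : ℝ≥0∞) :
    Φ.inv (a * u) ≤ max 1 a * Φ.inv u :=
  (Φ.inv_mono (by gcongr; exact le_max_right 1 a)).trans
    (Φ.inv_mul_le_mul (le_max_left 1 a) (max_ne_top ENNReal.one_ne_top ha) u)

def Degenerate : Prop := ∀ r : ℝ≥0, 0 < r → Φ.toFun r = ⊤

lemma inv_eq_zero_of_degenerate (hΦ : Φ.Degenerate) {s : ℝ≥0∞} (hs : s ≠ ⊤) : Φ.inv s = 0 := by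
  refine le_antisymm (ENNReal.le_of_forall_pos_le_add fun ε hε _ => ?_) zero_le
  have hmem : s < Φ.toFun ε := by rw [hΦ ε hε]; exact hs.lt_top
  rw [zero_add]
  exact sInf_le (mem_image_of_mem _ hmem)

lemma inv_pos_of_not_degenerate (hΦ : ¬Φ.Degenerate) {s : ℝ≥0∞} (hs : 0 < s) : 0 < Φ.inv s := by
  obtain ⟨r, hr, hΦr⟩ : ∃ r : ℝ≥0, 0 < r ∧ Φ.toFun r ≠ ⊤ := by
    simpa [Degenerate] using hΦ
  obtain ⟨ε, hε, hεs⟩ := ENNReal.exists_nnreal_pos_mul_lt hΦr hs.ne'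
  set δ : ℝ≥0 := min ε 1
  have hδ : Φ.toFun (δ * r) ≤ s :=
    calc Φ.toFun (δ * r) ≤ δ * Φ.toFun r := Φ.toFun_mul_le (min_le_right ε 1) r
      _ ≤ ε * Φ.toFun r := by gcongr; exact min_le_left ε 1
      _ ≤ s := hεs.le
  calc (0 : ℝ≥0∞) < (δ * r : ℝ≥0) := by positivity
    _ ≤ Φ.inv s := le_sInf fun _ ⟨u, hu, hu'⟩ => hu' ▸ ENNReal.coe_le_coe.2
      (not_lt.1 fun hlt => (hδ.trans_lt hu).not_ge (Φ.mono hlt.le))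

lemma ext_zero : Φ.ext 0 = 0 := by simp [ext, Φ.map_zero']

lemma ext_coe (u : ℝ≥0) : Φ.ext u = Φ.toFun u := by simp [ext]

lemma ext_mono : Monotone Φ.ext := by
  intro u v huv
  rcases eq_or_ne v ⊤ with rfl | hv
  · simp [ext]
  lift v to ℝ≥0 using hv
  lift u to ℝ≥0 using ne_top_of_le_ne_top ENNReal.coe_ne_top huv
  rw [ext_coe, ext_coe]
  exact Φ.mono (ENNReal.coe_le_coe.1 huv)

lemma ext_mul_le {a : ℝ≥0∞} (ha : a ≤ 1) (u : ℝ≥0∞) : Φ.ext (a * u) ≤ a * Φ.ext u := by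
  lift a to ℝ≥0 using ne_top_of_le_ne_top ENNReal.one_ne_top ha
  rcases eq_or_ne a 0 with rfl | ha0
  · simp [ext_zero]
  rcases eq_or_ne u ⊤ with rfl | hu
  · simp [ext, ENNReal.mul_top, ha0]
  lift u to ℝ≥0 using hu
  rw [← ENNReal.coe_mul, ext_coe, ext_coe]
  exact Φ.toFun_mul_le (by exact_mod_cast ha) u

lemma le_add_mul_ext {m : ℝ≥0∞} (hm0 : m ≠ 0) (hm : m ≠ ⊤) {σ : ℝ≥0} (hσ : Φ.inv m⁻¹ < σ)
    (u : ℝ≥0∞) : u ≤ σ + σ * m * Φ.ext u := by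
  have hσ0 : σ ≠ 0 := by rintro rfl; simp at hσ
  have hσm : 1 ≤ m * Φ.toFun σ :=
    calc 1 = m * m⁻¹ := (ENNReal.mul_inv_cancel hm0 hm).symm
      _ ≤ m * Φ.toFun σ := by gcongr; exact (Φ.lt_toFun_of_inv_lt hσ).le
  rcases eq_or_ne u ⊤ with rfl | hu
  · simp [ext, ENNReal.mul_top, hσ0, hm0]
  lift u to ℝ≥0 using hu
  rcases le_total u σ with hle | hle
  · exact le_add_right (by exact_mod_cast hle)
  refine le_add_left ?_
  calc (u : ℝ≥0∞) = σ * (u / σ : ℝ≥0) * 1 := by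
        rw [mul_one, ← ENNReal.coe_mul, mul_div_cancel₀ _ hσ0]
    _ ≤ σ * (u / σ : ℝ≥0) * (m * Φ.toFun σ) := by gcongr
    _ = σ * m * ((u / σ : ℝ≥0) * Φ.toFun σ) := by ring
    _ ≤ σ * m * Φ.toFun (u / σ * σ) := by
        gcongr; exact Φ.mul_toFun_le ((one_le_div₀ (pos_iff_ne_zero.2 hσ0)).2 hle) σ
    _ = σ * m * Φ.ext u := by rw [div_mul_cancel₀ _ hσ0, ext_coe]

lemma ext_div_le_half_add {u a b lam₁ lam₂ : ℝ≥0∞} (hu : u ≤ a + b) (h₁ : lam₁ ≠ 0)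
    (h₂ : lam₂ ≠ 0) (hfin : lam₁ + lam₂ ≠ ⊤) :
    Φ.ext (u / (2 * (lam₁ + lam₂))) ≤ 2⁻¹ * Φ.ext (a / lam₁) + 2⁻¹ * Φ.ext (b / lam₂) := by
  set M := max (a / lam₁) (b / lam₂)
  have hu' : u ≤ (lam₁ + lam₂) * M := by
    rw [add_mul]
    refine hu.trans (add_le_add ?_ ?_)
    · calc a = lam₁ * (a / lam₁) := (ENNReal.mul_div_cancel h₁ (ENNReal.add_ne_top.1 hfin).1).symm
        _ ≤ lam₁ * M := by gcongr; exact le_max_left _ _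
    · calc b = lam₂ * (b / lam₂) := (ENNReal.mul_div_cancel h₂ (ENNReal.add_ne_top.1 hfin).2).symm
        _ ≤ lam₂ * M := by gcongr; exact le_max_right _ _
  have hle : u / (2 * (lam₁ + lam₂)) ≤ 2⁻¹ * M := by
    rw [ENNReal.div_le_iff (by simp [h₁]) (ENNReal.mul_ne_top ENNReal.ofNat_ne_top hfin)]
    calc u ≤ (lam₁ + lam₂) * M := hu'
      _ = 2⁻¹ * 2 * (lam₁ + lam₂) * M := by
          rw [ENNReal.inv_mul_cancel two_ne_zero ENNReal.ofNat_ne_top, one_mul]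
      _ = 2⁻¹ * M * (2 * (lam₁ + lam₂)) := by ring
  calc Φ.ext (u / (2 * (lam₁ + lam₂))) ≤ Φ.ext (2⁻¹ * M) := Φ.ext_mono hle
    _ ≤ 2⁻¹ * Φ.ext M := Φ.ext_mul_le (by norm_num) M
    _ ≤ 2⁻¹ * (Φ.ext (a / lam₁) + Φ.ext (b / lam₂)) := by
        rw [Φ.ext_mono.map_max]
        gcongr
        exact max_le le_self_add le_add_self
    _ = 2⁻¹ * Φ.ext (a / lam₁) + 2⁻¹ * Φ.ext (b / lam₂) := mul_add _ _ _

lemma inv_ofReal_rpow_pos (hΦ : ¬Φ.Degenerate) {r : ℝ} (hr : 0 < r) (p : ℝ) :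
    0 < Φ.inv (ENNReal.ofReal r ^ p) :=
  Φ.inv_pos_of_not_degenerate hΦ (ENNReal.rpow_pos (ENNReal.ofReal_pos.2 hr) ENNReal.ofReal_ne_top)

lemma inv_ofReal_rpow_ne_top {r : ℝ} (hr : 0 < r) (p : ℝ) : Φ.inv (ENNReal.ofReal r ^ p) ≠ ⊤ :=
  Φ.inv_ne_top (ofReal_rpow_ne_top hr p)

lemma inv_rpow_neg_le_two_rpow_mul {p : ℝ} (hp : 0 ≤ p) (r : ℝ) :
    Φ.inv (ENNReal.ofReal r ^ (-p)) ≤ 2 ^ p * Φ.inv (ENNReal.ofReal (2 * r) ^ (-p)) := by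
  have h2 : (2 : ℝ≥0∞) ^ p ≠ ⊤ := ENNReal.rpow_ne_top_of_nonneg hp ENNReal.ofNat_ne_top
  have hscale : ENNReal.ofReal r ^ (-p) = 2 ^ p * ENNReal.ofReal (2 * r) ^ (-p) := by
    rw [ENNReal.ofReal_mul zero_le_two, ENNReal.ofReal_ofNat,
      ENNReal.mul_rpow_of_ne_top ENNReal.ofNat_ne_top ENNReal.ofReal_ne_top, ← mul_assoc,
      ← ENNReal.rpow_add _ _ two_ne_zero ENNReal.ofNat_ne_top, add_neg_cancel, ENNReal.rpow_zero,
      one_mul]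
  rw [hscale]
  exact Φ.inv_mul_le_mul ((ENNReal.one_rpow p).symm.trans_le (ENNReal.rpow_le_rpow one_le_two hp))
    h2 _

end YoungFunction

section Luxemburg

variable (Φ : YoungFunction) {μ : Measure X}

lemma luxNormE_mono_set {E E' : Set X} (h : E ⊆ E') (g : X → ℝ≥0∞) :
    luxNormE Φ μ E g ≤ luxNormE Φ μ E' g :=
  sInf_le_sInf fun _ ⟨hlam, hint⟩ => ⟨hlam, (lintegral_mono_set h).trans hint⟩

lemma luxNorm_univ_indicator {E : Set X} (hE : MeasurableSet E) (f : X → ℝ) :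
    luxNorm Φ μ univ (E.indicator f) = luxNormE Φ μ E fun x => ‖f x‖₊ := by
  have hint : ∀ lam, ∫⁻ x, Φ.ext (‖E.indicator f x‖₊ / lam) ∂μ =
      ∫⁻ x in E, Φ.ext (‖f x‖₊ / lam) ∂μ := by
    intro lam
    rw [← lintegral_indicator hE]
    congr 1 with x
    by_cases hx : x ∈ E <;> simp [hx, Φ.ext_zero]
  simp only [luxNorm, luxNormE, Measure.restrict_univ, hint]

lemma lintegral_le_mul_luxNormE {E : Set X} (hE0 : μ E ≠ 0) (hEt : μ E ≠ ⊤)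
    (hΦ : 0 < Φ.inv (μ E)⁻¹) (g : X → ℝ≥0∞) :
    ∫⁻ x in E, g x ∂μ ≤ 4 * Φ.inv (μ E)⁻¹ * μ E * luxNormE Φ μ E g := by
  set τ := Φ.inv (μ E)⁻¹
  have hτ : τ ≠ ⊤ := Φ.inv_ne_top (ENNReal.inv_ne_top.2 hE0)
  set σ : ℝ≥0 := 2 * τ.toNNReal
  have hσ : (σ : ℝ≥0∞) = 2 * τ := by simp [σ, ENNReal.coe_toNNReal hτ]
  have hτσ : τ < σ := by
    rw [hσ, two_mul]; exact ENNReal.lt_add_right hτ hΦ.ne'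
  have hK0 : 2 * (σ : ℝ≥0∞) * μ E ≠ 0 := by simp [hσ, hΦ.ne', hE0]
  have hKt : 2 * (σ : ℝ≥0∞) * μ E ≠ ⊤ := by finiteness
  have key : ∀ lam, 0 < lam → ∫⁻ x in E, Φ.ext (g x / lam) ∂μ ≤ 1 →
      ∫⁻ x in E, g x ∂μ ≤ 2 * σ * μ E * lam := by
    intro lam hlam0 hlam
    rcases eq_or_ne lam ⊤ with rfl | hlamt
    · rw [ENNReal.mul_top hK0]; exact le_top
    calc ∫⁻ x in E, g x ∂μ = lam * ∫⁻ x in E, g x / lam ∂μ := by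
          rw [← lintegral_const_mul' _ _ hlamt]
          simp_rw [ENNReal.mul_div_cancel hlam0.ne' hlamt]
      _ ≤ lam * ∫⁻ x in E, (σ + σ * μ E * Φ.ext (g x / lam)) ∂μ := by
          gcongr with x; exact Φ.le_add_mul_ext hE0 hEt hτσ _
      _ = lam * (σ * μ E + σ * μ E * ∫⁻ x in E, Φ.ext (g x / lam) ∂μ) := by
          rw [lintegral_add_left measurable_const, setLIntegral_const,
            lintegral_const_mul' _ _ (by finiteness)]
      _ ≤ lam * (σ * μ E + σ * μ E * 1) := by gcongr
      _ = 2 * σ * μ E * lam := by ring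
  calc ∫⁻ x in E, g x ∂μ ≤ 2 * σ * μ E * luxNormE Φ μ E g := by
        rw [mul_comm, ← ENNReal.div_le_iff hK0 hKt]
        exact le_sInf fun lam ⟨h0, h1⟩ => ENNReal.div_le_of_le_mul' (key lam h0 h1)
    _ = 4 * τ * μ E * luxNormE Φ μ E g := by rw [hσ]; ring

lemma rpow_sub_one_mul_lintegral_le {Φ Ψ : YoungFunction} {β c : ℝ}
    (hinv : ∀ t : ℝ≥0∞, 0 < t → t ≠ ⊤ → Φ.inv t ≤ ENNReal.ofReal c * t ^ β * Ψ.inv t)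
    {E : Set X} (hE0 : μ E ≠ 0) (hEt : μ E ≠ ⊤) (hΦ : 0 < Φ.inv (μ E)⁻¹) (g : X → ℝ≥0∞) :
    μ E ^ (β - 1) * ∫⁻ x in E, g x ∂μ ≤
      4 * ENNReal.ofReal c * Ψ.inv (μ E)⁻¹ * luxNormE Φ μ E g := by
  have hpow : μ E ^ (β - 1) * μ E = μ E ^ β := by
    have := ENNReal.rpow_add (β - 1) 1 hE0 hEt
    rwa [sub_add_cancel, ENNReal.rpow_one, eq_comm] at this
  have hcancel : μ E ^ β * (μ E)⁻¹ ^ β = 1 := by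
    rw [← ENNReal.mul_rpow_of_ne_top hEt (ENNReal.inv_ne_top.2 hE0),
      ENNReal.mul_inv_cancel hE0 hEt, ENNReal.one_rpow]
  calc μ E ^ (β - 1) * ∫⁻ x in E, g x ∂μ
      ≤ μ E ^ (β - 1) * (4 * Φ.inv (μ E)⁻¹ * μ E * luxNormE Φ μ E g) := by
        gcongr; exact lintegral_le_mul_luxNormE Φ hE0 hEt hΦ g
    _ = 4 * μ E ^ β * Φ.inv (μ E)⁻¹ * luxNormE Φ μ E g := by rw [← hpow]; ring
    _ ≤ 4 * μ E ^ β * (ENNReal.ofReal c * (μ E)⁻¹ ^ β * Ψ.inv (μ E)⁻¹) * luxNormE Φ μ E g := by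
        gcongr; exact hinv _ (ENNReal.inv_pos.2 hEt) (ENNReal.inv_ne_top.2 hE0)
    _ = 4 * ENNReal.ofReal c * Ψ.inv (μ E)⁻¹ * luxNormE Φ μ E g := by
        rw [← mul_one (4 * ENNReal.ofReal c), ← hcancel]; ring

lemma luxNormE_const_mul_inv_le {E : Set X} (hE0 : μ E ≠ 0) (hEt : μ E ≠ ⊤) (K : ℝ≥0∞) :
    luxNormE Φ μ E (fun _ => K) * Φ.inv (μ E)⁻¹ ≤ K := by
  refine ENNReal.mul_le_of_forall_lt fun a ha b hb => ?_
  rcases eq_or_ne b 0 with rfl | hb0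
  · rw [mul_zero]; exact zero_le
  lift b to ℝ≥0 using ne_top_of_lt hb
  have hL : luxNormE Φ μ E (fun _ => K) ≤ K / b := by
    refine le_of_forall_gt_imp_ge_of_dense fun lam hlam => sInf_le ⟨zero_le.trans_lt hlam, ?_⟩
    have hKlam : K / lam ≤ b := by
      refine ENNReal.div_le_of_le_mul ?_
      rw [mul_comm]
      exact (ENNReal.div_lt_iff (Or.inl hb0) (Or.inl ENNReal.coe_ne_top)).1 hlam |>.le
    calc ∫⁻ _ in E, Φ.ext (K / lam) ∂μ = Φ.ext (K / lam) * μ E := setLIntegral_const _ _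
      _ ≤ (μ E)⁻¹ * μ E := by
          gcongr
          exact (Φ.ext_mono hKlam).trans ((Φ.ext_coe b).trans_le (Φ.toFun_le_of_lt_inv hb))
      _ = 1 := ENNReal.inv_mul_cancel hE0 hEt
  calc a * b ≤ K / b * b := by gcongr; exact ha.le.trans hL
    _ = K := ENNReal.div_mul_cancel hb0 ENNReal.coe_ne_top

lemma luxNormE_le_of_le_add_const {E : Set X} (hE : MeasurableSet E) {h h₁ : X → ℝ≥0∞}
    {D : ℝ≥0∞} (hle : ∀ y ∈ E, h y ≤ h₁ y + D) :
    luxNormE Φ μ E h ≤ 2 * (luxNormE Φ μ E h₁ + luxNormE Φ μ E fun _ => D) := by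
  have key : ∀ lam₁ ∈ {lam : ℝ≥0∞ | 0 < lam ∧ ∫⁻ x in E, Φ.ext (h₁ x / lam) ∂μ ≤ 1},
      ∀ lam₂ ∈ {lam : ℝ≥0∞ | 0 < lam ∧ ∫⁻ _ in E, Φ.ext (D / lam) ∂μ ≤ 1},
      luxNormE Φ μ E h ≤ 2 * (lam₁ + lam₂) := by
    rintro lam₁ ⟨h₁0, hint₁⟩ lam₂ ⟨h₂0, hint₂⟩
    rcases eq_or_ne (lam₁ + lam₂) ⊤ with htop | hfin
    · rw [htop, ENNReal.mul_top two_ne_zero]; exact le_top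
    refine sInf_le ⟨by positivity, ?_⟩
    calc ∫⁻ y in E, Φ.ext (h y / (2 * (lam₁ + lam₂))) ∂μ
        ≤ ∫⁻ y in E, (2⁻¹ * Φ.ext (h₁ y / lam₁) + 2⁻¹ * Φ.ext (D / lam₂)) ∂μ :=
          setLIntegral_mono' hE fun y hy =>
            Φ.ext_div_le_half_add (hle y hy) h₁0.ne' h₂0.ne' hfin
      _ = 2⁻¹ * ∫⁻ y in E, Φ.ext (h₁ y / lam₁) ∂μ + 2⁻¹ * ∫⁻ _ in E, Φ.ext (D / lam₂) ∂μ := by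
          rw [lintegral_add_right _ measurable_const, lintegral_const_mul' _ _ (by norm_num),
            lintegral_const_mul' _ _ (by norm_num)]
      _ ≤ 2⁻¹ * 1 + 2⁻¹ * 1 := by gcongr
      _ = 1 := by rw [mul_one, ENNReal.inv_two_add_inv_two]
  have := ENNReal.le_iInf₂_add_iInf₂ (a := luxNormE Φ μ E h / 2)
    fun lam₁ hlam₁ lam₂ hlam₂ => ENNReal.div_le_of_le_mul' (key lam₁ hlam₁ lam₂ hlam₂)
  rwa [← sInf_eq_iInf, ← sInf_eq_iInf, ENNReal.div_le_iff two_ne_zero ENNReal.ofNat_ne_top,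
    mul_comm] at this

end Luxemburg

section Euclidean

variable {n : ℕ}

lemma inv_volume_ball (z : En n) {s : ℝ} (hs : 0 < s) :
    (volume (ball z s))⁻¹ = ENNReal.ofReal s ^ (-(n : ℝ)) * (volume (ball (0 : En n) 1))⁻¹ := by
  have hvol : volume (ball z s) = ENNReal.ofReal s ^ n * volume (ball (0 : En n) 1) := by
    simpa [finrank_euclideanSpace_fin, ENNReal.ofReal_pow hs.le] using
      Measure.addHaar_ball_mul_of_pos volume z hs 1
  rw [hvol, ENNReal.mul_inv (Or.inl (pow_ne_zero _ (ENNReal.ofReal_pos.2 hs).ne'))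
    (Or.inl (by finiteness)), ENNReal.rpow_neg, ENNReal.rpow_natCast]

lemma YoungFunction.inv_inv_volume_ball_le (Φ : YoungFunction) (z : En n) {s : ℝ} (hs : 0 < s) :
    Φ.inv (volume (ball z s))⁻¹ ≤
      max 1 (volume (ball (0 : En n) 1))⁻¹ * Φ.inv (ENNReal.ofReal s ^ (-(n : ℝ))) := by
  rw [inv_volume_ball z hs, mul_comm]
  exact Φ.inv_mul_le_max_mul (ENNReal.inv_ne_top.2 (measure_ball_pos volume _ one_pos).ne') _

lemma YoungFunction.inv_rpow_neg_le_inv_inv_volume_ball (Φ : YoungFunction) (z : En n) {s : ℝ}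
    (hs : 0 < s) :
    Φ.inv (ENNReal.ofReal s ^ (-(n : ℝ))) ≤
      max 1 (volume (ball (0 : En n) 1)) * Φ.inv (volume (ball z s))⁻¹ := by
  have hv0 : volume (ball (0 : En n) 1) ≠ 0 := (measure_ball_pos volume _ one_pos).ne'
  have hvt : volume (ball (0 : En n) 1) ≠ ⊤ := measure_ball_lt_top.ne
  rw [show ENNReal.ofReal s ^ (-(n : ℝ)) = volume (ball (0 : En n) 1) * (volume (ball z s))⁻¹ by
    rw [inv_volume_ball z hs, mul_left_comm, ENNReal.mul_inv_cancel hv0 hvt, mul_one]]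
  exact Φ.inv_mul_le_max_mul hvt _

lemma luxNormE_const_mul_inv_rpow_le (Φ : YoungFunction) (x : En n) {r : ℝ} (hr : 0 < r)
    (K : ℝ≥0∞) :
    luxNormE Φ volume (ball x r) (fun _ => K) * Φ.inv (ENNReal.ofReal r ^ (-(n : ℝ))) ≤
      max 1 (volume (ball (0 : En n) 1)) * K :=
  calc _ ≤ luxNormE Φ volume (ball x r) (fun _ => K) *
        (max 1 (volume (ball (0 : En n) 1)) * Φ.inv (volume (ball x r))⁻¹) := by
        gcongr; exact Φ.inv_rpow_neg_le_inv_inv_volume_ball x hr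
    _ = max 1 (volume (ball (0 : En n) 1)) *
        (luxNormE Φ volume (ball x r) (fun _ => K) * Φ.inv (volume (ball x r))⁻¹) := by ring
    _ ≤ max 1 (volume (ball (0 : En n) 1)) * K := by
        gcongr
        exact luxNormE_const_mul_inv_le Φ (measure_ball_pos volume x hr).ne'
          measure_ball_lt_top.ne K

def fracAverage (n : ℕ) (α : ℝ) (f : En n → ℝ) (y : En n) (t : ℝ) : ℝ≥0∞ :=
  volume (ball y t) ^ (α / n - 1) * ∫⁻ z in ball y t, ‖f z‖₊

lemma fracMaximal_le_indicator_add {α : ℝ} {f : En n → ℝ} {x y : En n} {r : ℝ} {D : ℝ≥0∞}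
    (hy : y ∈ ball x r) (htail : ∀ t, r < t → fracAverage n α f y t ≤ D) :
    fracMaximal n α f y ≤ fracMaximal n α ((ball x (2 * r)).indicator f) y + D := by
  refine iSup₂_le fun t ht => ?_
  rcases le_or_gt t r with htr | htr
  · have hsub : ball y t ⊆ ball x (2 * r) :=
      ball_subset_ball' (by linarith [mem_ball.1 hy])
    have hloc : ∫⁻ z in ball y t, ‖f z‖₊ = ∫⁻ z in ball y t, ‖(ball x (2 * r)).indicator f z‖₊ :=
      setLIntegral_congr_fun measurableSet_ball fun z hz => by rw [indicator_of_mem (hsub hz)]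
    rw [hloc]
    exact le_add_right
      (le_iSup₂ (f := fun t (_ : 0 < t) => fracAverage n α ((ball x (2 * r)).indicator f) y t) t ht)
  · exact le_add_left (htail t htr)

end Euclidean

/-- Condition (iii) of the theorem with the quotients cleared. -/
def SpanneCondition (n : ℕ) (Φ Ψ : YoungFunction) (lam₁ lam₂ C : ℝ) : Prop :=
  ∀ r t : ℝ, 0 < r → r < t →
    Ψ.inv (ENNReal.ofReal t ^ (-(n : ℝ))) * Ψ.inv (ENNReal.ofReal r ^ (-lam₂)) ≤
      ENNReal.ofReal C * Ψ.inv (ENNReal.ofReal r ^ (-(n : ℝ))) * Φ.inv (ENNReal.ofReal t ^ (-lam₁))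

section Spanne

variable {n : ℕ} {α lam₁ lam₂ A c C : ℝ} {Φ Ψ : YoungFunction}

lemma spanneCondition_of_iSup_div_le (hΨ : ¬Ψ.Degenerate)
    (hcond : ∀ r : ℝ, 0 < r →
      (⨆ (t : ℝ) (_ : r < t),
        Ψ.inv (ENNReal.ofReal t ^ (-(n : ℝ))) / Φ.inv (ENNReal.ofReal t ^ (-lam₁))) ≤
        ENNReal.ofReal C *
          (Ψ.inv (ENNReal.ofReal r ^ (-(n : ℝ))) / Ψ.inv (ENNReal.ofReal r ^ (-lam₂)))) :
    SpanneCondition n Φ Ψ lam₁ lam₂ C := fun r t hr hrt =>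
  mul_le_of_div_le_mul_div ((le_iSup₂_of_le t hrt le_rfl).trans (hcond r hr))
    (Φ.inv_ofReal_rpow_ne_top (hr.trans hrt) _) (Ψ.inv_ofReal_rpow_pos hΨ hr _).ne'
    (Ψ.inv_ofReal_rpow_ne_top hr _)
    (ENNReal.mul_ne_top ENNReal.ofReal_ne_top (Ψ.inv_ofReal_rpow_ne_top hr _))

lemma not_degenerate_of_spanneCondition (hΨ : ¬Ψ.Degenerate)
    (hcross : SpanneCondition n Φ Ψ lam₁ lam₂ C) : ¬Φ.Degenerate := fun hΦ => by
  have h := hcross 1 2 one_pos one_lt_two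
  rw [Φ.inv_eq_zero_of_degenerate hΦ (ofReal_rpow_ne_top two_pos _), mul_zero] at h
  exact (mul_pos (Ψ.inv_ofReal_rpow_pos hΨ two_pos _).ne'
    (Ψ.inv_ofReal_rpow_pos hΨ one_pos _).ne').ne' (nonpos_iff_eq_zero.1 h)

lemma inv_rpow_neg_le_of_spanneCondition (hΨ : ¬Ψ.Degenerate)
    (hcross : SpanneCondition n Φ Ψ lam₁ lam₂ C) {r : ℝ} (hr : 0 < r) :
    Ψ.inv (ENNReal.ofReal r ^ (-lam₂)) ≤
      2 ^ (n : ℝ) * ENNReal.ofReal C * Φ.inv (ENNReal.ofReal (2 * r) ^ (-lam₁)) := by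
  have h2r : 0 < 2 * r := by positivity
  set T := Ψ.inv (ENNReal.ofReal (2 * r) ^ (-(n : ℝ)))
  refine (ENNReal.mul_le_mul_iff_right (Ψ.inv_ofReal_rpow_pos hΨ h2r (-(n : ℝ))).ne'
    (Ψ.inv_ofReal_rpow_ne_top h2r (-(n : ℝ)))).1 ?_
  calc T * Ψ.inv (ENNReal.ofReal r ^ (-lam₂))
      ≤ ENNReal.ofReal C * Ψ.inv (ENNReal.ofReal r ^ (-(n : ℝ))) *
          Φ.inv (ENNReal.ofReal (2 * r) ^ (-lam₁)) := hcross r (2 * r) hr (by linarith)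
    _ ≤ ENNReal.ofReal C * (2 ^ (n : ℝ) * T) * Φ.inv (ENNReal.ofReal (2 * r) ^ (-lam₁)) := by
        gcongr; exact Ψ.inv_rpow_neg_le_two_rpow_mul n.cast_nonneg r
    _ = T * (2 ^ (n : ℝ) * ENNReal.ofReal C * Φ.inv (ENNReal.ofReal (2 * r) ^ (-lam₁))) := by ring

lemma inv_mul_luxNormE_fracMaximal_indicator_le (hΨ : ¬Ψ.Degenerate)
    (hbdd : ∀ g : En n → ℝ,
      luxNormE Ψ volume univ (fracMaximal n α g) ≤ ENNReal.ofReal A * luxNorm Φ volume univ g)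
    (hcross : SpanneCondition n Φ Ψ lam₁ lam₂ C) (f : En n → ℝ) (x : En n) {r : ℝ} (hr : 0 < r) :
    Ψ.inv (ENNReal.ofReal r ^ (-lam₂)) *
        luxNormE Ψ volume (ball x r) (fracMaximal n α ((ball x (2 * r)).indicator f)) ≤
      2 ^ (n : ℝ) * ENNReal.ofReal C * ENNReal.ofReal A * morreyLamNorm n Φ lam₁ f := by
  have h2r : 0 < 2 * r := by positivity
  set S := Φ.inv (ENNReal.ofReal (2 * r) ^ (-lam₁))
  calc Ψ.inv (ENNReal.ofReal r ^ (-lam₂)) *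
        luxNormE Ψ volume (ball x r) (fracMaximal n α ((ball x (2 * r)).indicator f))
      ≤ 2 ^ (n : ℝ) * ENNReal.ofReal C * S *
          (ENNReal.ofReal A * luxNorm Φ volume univ ((ball x (2 * r)).indicator f)) := by
        gcongr
        · exact inv_rpow_neg_le_of_spanneCondition hΨ hcross hr
        · exact (luxNormE_mono_set Ψ (subset_univ _) _).trans (hbdd _)
    _ = 2 ^ (n : ℝ) * ENNReal.ofReal C * ENNReal.ofReal A *
          (S * luxNormE Φ volume (ball x (2 * r)) fun z => ‖f z‖₊) := by
        rw [luxNorm_univ_indicator Φ measurableSet_ball]; ring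
    _ ≤ 2 ^ (n : ℝ) * ENNReal.ofReal C * ENNReal.ofReal A * morreyLamNorm n Φ lam₁ f := by
        gcongr; exact le_iSup₂_of_le x (2 * r) (le_iSup_of_le h2r le_rfl)

lemma inv_mul_fracAverage_le (hΦ : ¬Φ.Degenerate)
    (hinv : ∀ t : ℝ≥0∞, 0 < t → t ≠ ⊤ →
      Φ.inv t ≤ ENNReal.ofReal c * t ^ (α / (n : ℝ)) * Ψ.inv t)
    (hcross : SpanneCondition n Φ Ψ lam₁ lam₂ C) (f : En n → ℝ) (y : En n) {r t : ℝ}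
    (hr : 0 < r) (hrt : r < t) :
    Ψ.inv (ENNReal.ofReal r ^ (-lam₂)) * fracAverage n α f y t ≤
      4 * ENNReal.ofReal c * max 1 (volume (ball (0 : En n) 1))⁻¹ * ENNReal.ofReal C *
        Ψ.inv (ENNReal.ofReal r ^ (-(n : ℝ))) * morreyLamNorm n Φ lam₁ f := by
  have ht : 0 < t := hr.trans hrt
  set K₀ := max 1 (volume (ball (0 : En n) 1))⁻¹
  set Q := Ψ.inv (ENNReal.ofReal r ^ (-lam₂))
  set T := Ψ.inv (ENNReal.ofReal t ^ (-(n : ℝ)))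
  set S := Φ.inv (ENNReal.ofReal t ^ (-lam₁))
  set L := luxNormE Φ volume (ball y t) fun z => ‖f z‖₊
  calc Q * fracAverage n α f y t
      ≤ Q * (4 * ENNReal.ofReal c * Ψ.inv (volume (ball y t))⁻¹ * L) := by
        gcongr Q * ?_
        exact rpow_sub_one_mul_lintegral_le hinv (measure_ball_pos volume y ht).ne'
          measure_ball_lt_top.ne
          (Φ.inv_pos_of_not_degenerate hΦ (ENNReal.inv_pos.2 measure_ball_lt_top.ne)) _
    _ ≤ Q * (4 * ENNReal.ofReal c * (K₀ * T) * L) := by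
        gcongr; exact Ψ.inv_inv_volume_ball_le y ht
    _ = 4 * ENNReal.ofReal c * K₀ * (T * Q) * L := by ring
    _ ≤ 4 * ENNReal.ofReal c * K₀ *
          (ENNReal.ofReal C * Ψ.inv (ENNReal.ofReal r ^ (-(n : ℝ))) * S) * L := by
        gcongr 4 * ENNReal.ofReal c * K₀ * ?_ * L; exact hcross r t hr hrt
    _ = 4 * ENNReal.ofReal c * K₀ * ENNReal.ofReal C *
          Ψ.inv (ENNReal.ofReal r ^ (-(n : ℝ))) * (S * L) := by ring
    _ ≤ _ := by gcongr; exact le_iSup₂_of_le y t (le_iSup_of_le ht le_rfl)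

lemma inv_mul_luxNormE_fracMaximal_le (hΦ : ¬Φ.Degenerate) (hΨ : ¬Ψ.Degenerate)
    (hbdd : ∀ g : En n → ℝ,
      luxNormE Ψ volume univ (fracMaximal n α g) ≤ ENNReal.ofReal A * luxNorm Φ volume univ g)
    (hinv : ∀ t : ℝ≥0∞, 0 < t → t ≠ ⊤ →
      Φ.inv t ≤ ENNReal.ofReal c * t ^ (α / (n : ℝ)) * Ψ.inv t)
    (hcross : SpanneCondition n Φ Ψ lam₁ lam₂ C) (f : En n → ℝ) (x : En n) {r : ℝ} (hr : 0 < r) :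
    Ψ.inv (ENNReal.ofReal r ^ (-lam₂)) * luxNormE Ψ volume (ball x r) (fracMaximal n α f) ≤
      2 * (2 ^ (n : ℝ) * ENNReal.ofReal C * ENNReal.ofReal A +
        4 * ENNReal.ofReal c * max 1 (volume (ball (0 : En n) 1))⁻¹ * ENNReal.ofReal C *
          max 1 (volume (ball (0 : En n) 1))) * morreyLamNorm n Φ lam₁ f := by
  set K₀ := max 1 (volume (ball (0 : En n) 1))⁻¹
  set K₁ := max 1 (volume (ball (0 : En n) 1))
  set N := morreyLamNorm n Φ lam₁ f
  set Q := Ψ.inv (ENNReal.ofReal r ^ (-lam₂))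
  set P := Ψ.inv (ENNReal.ofReal r ^ (-(n : ℝ)))
  have hQ0 : Q ≠ 0 := (Ψ.inv_ofReal_rpow_pos hΨ hr _).ne'
  have hQ : Q ≠ ⊤ := Ψ.inv_ofReal_rpow_ne_top hr _
  have hP0 : P ≠ 0 := (Ψ.inv_ofReal_rpow_pos hΨ hr _).ne'
  have hP : P ≠ ⊤ := Ψ.inv_ofReal_rpow_ne_top hr _
  -- `D` bounds the contribution of the balls of radius `> r` to `M_α f` on `B(x, r)`
  set D := 4 * ENNReal.ofReal c * K₀ * ENNReal.ofReal C * P * N / Q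
  have hsplit : ∀ y ∈ ball x r,
      fracMaximal n α f y ≤ fracMaximal n α ((ball x (2 * r)).indicator f) y + D :=
    fun y hy => fracMaximal_le_indicator_add hy fun t hrt => by
      rw [ENNReal.le_div_iff_mul_le (Or.inl hQ0) (Or.inl hQ), mul_comm]
      exact inv_mul_fracAverage_le hΦ hinv hcross f y hr hrt
  have hD : Q * luxNormE Ψ volume (ball x r) (fun _ => D) ≤
      4 * ENNReal.ofReal c * K₀ * ENNReal.ofReal C * K₁ * N := by
    refine (ENNReal.mul_le_mul_iff_left hP0 hP).1 ?_
    calc Q * luxNormE Ψ volume (ball x r) (fun _ => D) * P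
        = Q * (luxNormE Ψ volume (ball x r) (fun _ => D) * P) := mul_assoc _ _ _
      _ ≤ Q * (K₁ * D) := by gcongr Q * ?_; exact luxNormE_const_mul_inv_rpow_le Ψ x hr D
      _ = K₁ * (Q * D) := by ring
      _ = 4 * ENNReal.ofReal c * K₀ * ENNReal.ofReal C * K₁ * N * P := by
          rw [ENNReal.mul_div_cancel hQ0 hQ]; ring
  calc Q * luxNormE Ψ volume (ball x r) (fracMaximal n α f)
      ≤ Q * (2 * (luxNormE Ψ volume (ball x r) (fracMaximal n α ((ball x (2 * r)).indicator f)) +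
          luxNormE Ψ volume (ball x r) fun _ => D)) := by
        gcongr; exact luxNormE_le_of_le_add_const Ψ measurableSet_ball hsplit
    _ = 2 * (Q * luxNormE Ψ volume (ball x r)
          (fracMaximal n α ((ball x (2 * r)).indicator f)) +
          Q * luxNormE Ψ volume (ball x r) fun _ => D) := by ring
    _ ≤ 2 * (2 ^ (n : ℝ) * ENNReal.ofReal C * ENNReal.ofReal A * N +
          4 * ENNReal.ofReal c * K₀ * ENNReal.ofReal C * K₁ * N) := by
        gcongr 2 * (?_ + ?_)
        exact inv_mul_luxNormE_fracMaximal_indicator_le hΨ hbdd hcross f x hr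
    _ = _ := by ring

end Spanne

theorem fracMaximal_orliczMorreyLam_bounded_general
    (n : ℕ) (α : ℝ)
    (lam₁ lam₂ : ℝ)
    (Φ Ψ : YoungFunction)
    (A : ℝ)
    (hbdd : ∀ g : En n → ℝ,
      luxNormE Ψ volume Set.univ (fracMaximal n α g) ≤
        ENNReal.ofReal A * luxNorm Φ volume Set.univ g)
    (c : ℝ)
    (hinv : ∀ t : ℝ≥0∞, 0 < t → t ≠ ⊤ →
      Φ.inv t ≤ ENNReal.ofReal c * t ^ (α / (n : ℝ)) * Ψ.inv t)
    (C : ℝ)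
    (hcond : ∀ r : ℝ, 0 < r →
      (⨆ (t : ℝ) (_ : r < t),
        Ψ.inv (ENNReal.ofReal t ^ (-(n : ℝ))) / Φ.inv (ENNReal.ofReal t ^ (-lam₁))) ≤
        ENNReal.ofReal C *
          (Ψ.inv (ENNReal.ofReal r ^ (-(n : ℝ))) / Ψ.inv (ENNReal.ofReal r ^ (-lam₂)))) :
    ∃ C' : ℝ, 0 < C' ∧ ∀ f : En n → ℝ, LocallyIntegrable f volume →
      morreyLamNormE n Ψ lam₂ (fracMaximal n α f) ≤
        ENNReal.ofReal C' * morreyLamNorm n Φ lam₁ f := by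
  by_cases hΨ : Ψ.Degenerate
  · refine ⟨1, one_pos, fun f _ => (iSup₂_le fun x r => iSup_le fun hr => ?_).trans zero_le⟩
    rw [Ψ.inv_eq_zero_of_degenerate hΨ (ofReal_rpow_ne_top hr _), zero_mul]
  have hcross := spanneCondition_of_iSup_div_le hΨ hcond
  have hΦ := not_degenerate_of_spanneCondition hΨ hcross
  set Γ : ℝ≥0∞ := 2 * (2 ^ (n : ℝ) * ENNReal.ofReal C * ENNReal.ofReal A +
    4 * ENNReal.ofReal c * max 1 (volume (ball (0 : En n) 1))⁻¹ * ENNReal.ofReal C *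
      max 1 (volume (ball (0 : En n) 1)))
  have hΓ : Γ ≠ ⊤ := by
    have hv₀ : (volume (ball (0 : En n) 1))⁻¹ ≠ ⊤ :=
      ENNReal.inv_ne_top.2 (measure_ball_pos volume (0 : En n) one_pos).ne'
    have hv₁ : volume (ball (0 : En n) 1) ≠ ⊤ := measure_ball_lt_top.ne
    finiteness
  refine ⟨Γ.toReal + 1, by positivity, fun f _ => ?_⟩
  calc morreyLamNormE n Ψ lam₂ (fracMaximal n α f) ≤ Γ * morreyLamNorm n Φ lam₁ f :=
        iSup₂_le fun x r => iSup_le fun hr =>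
          inv_mul_luxNormE_fracMaximal_le hΦ hΨ hbdd hinv hcross f x hr
    _ ≤ ENNReal.ofReal (Γ.toReal + 1) * morreyLamNorm n Φ lam₁ f := by
        gcongr
        calc Γ = ENNReal.ofReal Γ.toReal := (ENNReal.ofReal_toReal hΓ).symm
          _ ≤ ENNReal.ofReal (Γ.toReal + 1) := ENNReal.ofReal_le_ofReal (by linarith)

/-- Spanne type boundedness of `M_α` from the Orlicz–Morrey space
`M_{Φ,λ₁}(ℝⁿ)` to `M_{Ψ,λ₂}(ℝⁿ)`. -/
theorem fracMaximal_orliczMorreyLam_bounded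
    (n : ℕ) (α : ℝ) (hα0 : 0 ≤ α) (hαn : α < n)
    (lam₁ lam₂ : ℝ) (hlam₁0 : 0 ≤ lam₁) (hlam₁n : lam₁ < n)
    (hlam₂0 : 0 ≤ lam₂) (hlam₂n : lam₂ < n)
    (Φ Ψ : YoungFunction)
    (A : ℝ) (hA : 0 < A)
    (hbdd : ∀ g : En n → ℝ,
      luxNormE Ψ volume Set.univ (fracMaximal n α g) ≤
        ENNReal.ofReal A * luxNorm Φ volume Set.univ g)
    (c : ℝ) (hc : 0 < c)
    (hinv : ∀ t : ℝ≥0∞, 0 < t → t ≠ ⊤ →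
      Φ.inv t ≤ ENNReal.ofReal c * t ^ (α / (n : ℝ)) * Ψ.inv t)
    (C : ℝ) (hC : 0 < C)
    (hcond : ∀ r : ℝ, 0 < r →
      (⨆ (t : ℝ) (_ : r < t),
        Ψ.inv (ENNReal.ofReal t ^ (-(n : ℝ))) / Φ.inv (ENNReal.ofReal t ^ (-lam₁))) ≤
        ENNReal.ofReal C *
          (Ψ.inv (ENNReal.ofReal r ^ (-(n : ℝ))) / Ψ.inv (ENNReal.ofReal r ^ (-lam₂)))) :
    ∃ C' : ℝ, 0 < C' ∧ ∀ f : En n → ℝ, LocallyIntegrable f volume →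
      morreyLamNormE n Ψ lam₂ (fracMaximal n α f) ≤
        ENNReal.ofReal C' * morreyLamNorm n Φ lam₁ f :=
  fracMaximal_orliczMorreyLam_bounded_general n α lam₁ lam₂ Φ Ψ A hbdd c hinv C hcond
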